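/- If |X| = ∞ (countably infinite alphabet), β ∈ (0,1], and P = {(P₀, P_b) : TV(P₀, P_b) ≥ 1-β}, then any Type-2 backdoor detector with access to (D, P₀) that is α-error must have α = ½; i.e., no detector can beat random guessing uniformly over P. -/

import Mathlib

open MeasureTheory

/-- Total variation distance between two PMFs on a countable alphabet. -/
noncomputable def tvPMF {X : Type*} (P Q : PMF X) : ℝ :=
  (∑' x, |(P x).toReal - (Q x).toReal|) / 2

/-!
Take `P₀` uniform on `K` points and, for each `M`-subset `S` of them, `P_b` uniform on `S`, so
that `TV(P₀, P_b) = 1 - M/K ≥ 1 - β` once `K ≥ M/β`. Averaged over the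
`C(K, M)` choices of `S`, the law of `N` samples from `γ P_b + (1 - γ) P₀` dominates
`1 - N²/M` times the law of `N` samples from `P₀`, pointwise: expanding the product over the
coordinates, a set `T` of coordinates charged to `P_b` contributes `(γ/M)^|T|` times the number
of `S` containing the sampled points, which is at least `C(K - |T|, M - |T|)`; then
`C(K, M) (M)_t = (K)_t C(K - t, M - t)` and `(M)_t ≥ M^t (1 - t²/M)`. Hence the average
type-II error is at least `1 - N²/M` times the probability of answering "clean" under `P₀`, so
some pair has risk at least `(1 - N²/M)/2`. An infinite alphabet allows `M → ∞`.
-/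

open Finset Filter Topology
open scoped ENNReal

theorem Nat.choose_sub_le_choose_sub {K M t u : ℕ} (hut : u ≤ t) (htM : t ≤ M) (hMK : M ≤ K) :
    (K - t).choose (M - t) ≤ (K - u).choose (M - u) := by
  rw [Nat.choose_symm_of_eq_add (show K - t = (M - t) + (K - M) by omega),
    Nat.choose_symm_of_eq_add (show K - u = (M - u) + (K - M) by omega)]
  exact Nat.choose_le_choose _ (by omega)

theorem Finset.sum_pow_mul_choose_le_sum_powersetCard_prod {α R : Type*} [DecidableEq α]
    [CommSemiring R] [PartialOrder R] [IsOrderedRing R] {a b : R} (ha : 0 ≤ a) (hb : 0 ≤ b)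
    (s : Finset α) {M N : ℕ} (hNM : N ≤ M) (hMs : M ≤ #s) (x : Fin N → α) (hx : ∀ i, x i ∈ s) :
    ∑ T ∈ (univ : Finset (Fin N)).powerset, a ^ #T * b ^ (N - #T) * (#s - #T).choose (M - #T)
      ≤ ∑ S ∈ s.powersetCard M, ∏ i, ((if x i ∈ S then a else 0) + b) := by
  have hexpand : ∀ S : Finset α, ∏ i, ((if x i ∈ S then a else 0) + b)
      = ∑ T ∈ (univ : Finset (Fin N)).powerset,
          (if T.image x ⊆ S then a ^ #T * b ^ (N - #T) else 0) := by
    intro S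
    rw [prod_add]
    refine sum_congr rfl fun T _ => ?_
    rw [prod_ite_zero, prod_const, prod_const, card_sdiff_of_subset (subset_univ T), card_univ,
      Fintype.card_fin, ite_mul, zero_mul]
    congr 1
    exact propext image_subset_iff.symm
  simp_rw [hexpand]
  rw [sum_comm]
  refine sum_le_sum fun T _ => ?_
  have hTN : #T ≤ N := by simpa using card_le_card (subset_univ T)
  rw [sum_ite, sum_const_zero, add_zero, sum_const, nsmul_eq_mul, mul_comm,
    card_filter_powersetCard_subset _ _ _ (image_subset_iff.2 fun i _ => hx i)
      (card_image_le.trans (hTN.trans hNM))]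
  gcongr
  exact_mod_cast Nat.choose_sub_le_choose_sub card_image_le (hTN.trans hNM) hMs

theorem Nat.choose_mul_descFactorial {K M t : ℕ} (htM : t ≤ M) :
    K.choose M * M.descFactorial t = K.descFactorial t * (K - t).choose (M - t) := by
  rw [Nat.descFactorial_eq_factorial_mul_choose, Nat.descFactorial_eq_factorial_mul_choose,
    mul_left_comm, Nat.choose_mul htM, mul_assoc]

theorem one_sub_sq_div_mul_pow_le_descFactorial {M t : ℕ} (htM : t ≤ M) :
    (1 - (t : ℝ) ^ 2 / M) * (M : ℝ) ^ t ≤ M.descFactorial t := by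
  rcases Nat.eq_zero_or_pos M with rfl | hM
  · simp [Nat.le_zero.1 htM]
  have hMR : (0 : ℝ) < M := by exact_mod_cast hM
  have hbern : 1 + t * (-(t / M : ℝ)) ≤ (1 + -(t / M : ℝ)) ^ t :=
    one_add_mul_le_pow (by rw [neg_le_neg_iff, div_le_iff₀ hMR]; norm_cast; omega) t
  calc (1 - (t : ℝ) ^ 2 / M) * (M : ℝ) ^ t = (1 + t * (-(t / M : ℝ))) * (M : ℝ) ^ t := by ring
    _ ≤ (1 + -(t / M : ℝ)) ^ t * (M : ℝ) ^ t := by gcongr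
    _ = ((M - t : ℕ) : ℝ) ^ t := by
      rw [← mul_pow, Nat.cast_sub htM]; field_simp; ring
    _ ≤ M.descFactorial t := by
      exact_mod_cast (Nat.pow_le_pow_left (by omega) t).trans (Nat.pow_sub_le_descFactorial M t)

theorem one_sub_sq_div_mul_choose_mul_pow_le (K : ℕ) {M t : ℕ} (htM : t ≤ M) :
    (1 - (t : ℝ) ^ 2 / M) * ((K.choose M : ℝ) * (M : ℝ) ^ t)
      ≤ (K : ℝ) ^ t * ((K - t).choose (M - t) : ℝ) :=
  calc (1 - (t : ℝ) ^ 2 / M) * ((K.choose M : ℝ) * (M : ℝ) ^ t)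
      = (K.choose M : ℝ) * ((1 - (t : ℝ) ^ 2 / M) * (M : ℝ) ^ t) := by ring
    _ ≤ (K.choose M : ℝ) * (M.descFactorial t : ℝ) := by
      gcongr; exact one_sub_sq_div_mul_pow_le_descFactorial htM
    _ = (K.descFactorial t : ℝ) * ((K - t).choose (M - t) : ℝ) := by
      exact_mod_cast Nat.choose_mul_descFactorial htM
    _ ≤ (K : ℝ) ^ t * ((K - t).choose (M - t) : ℝ) := by
      gcongr; exact_mod_cast Nat.descFactorial_le_pow K t

theorem ENNReal.ofReal_one_sub_mul_choose_mul_inv_pow_le {K M N t : ℕ} (htN : t ≤ N)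
    (hNM : N ≤ M) (hM : 0 < M) (hMK : M ≤ K) :
    ENNReal.ofReal (1 - (N : ℝ) ^ 2 / M) * K.choose M * (K : ℝ≥0∞)⁻¹ ^ t
      ≤ (M : ℝ≥0∞)⁻¹ ^ t * (K - t).choose (M - t) := by
  have hMR : (0 : ℝ) < M := by exact_mod_cast hM
  have hKR : (0 : ℝ) < K := by exact_mod_cast hM.trans_le hMK
  have hreal : (1 - (N : ℝ) ^ 2 / M) * K.choose M * (K : ℝ)⁻¹ ^ t
      ≤ (M : ℝ)⁻¹ ^ t * (K - t).choose (M - t) :=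
    calc (1 - (N : ℝ) ^ 2 / M) * K.choose M * (K : ℝ)⁻¹ ^ t
        = (1 - (N : ℝ) ^ 2 / M) * (K.choose M * (M : ℝ) ^ t) / ((K : ℝ) ^ t * (M : ℝ) ^ t) := by
          rw [inv_pow]; field_simp
      _ ≤ (1 - (t : ℝ) ^ 2 / M) * (K.choose M * (M : ℝ) ^ t) / ((K : ℝ) ^ t * (M : ℝ) ^ t) := by
          gcongr
      _ ≤ (K : ℝ) ^ t * (K - t).choose (M - t) / ((K : ℝ) ^ t * (M : ℝ) ^ t) := by
          gcongr ?_ / _; exact one_sub_sq_div_mul_choose_mul_pow_le K (htN.trans hNM)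
      _ = (M : ℝ)⁻¹ ^ t * (K - t).choose (M - t) := by
          rw [inv_pow]; field_simp
  have := ENNReal.ofReal_le_ofReal hreal
  rwa [ENNReal.ofReal_mul' (by positivity), ENNReal.ofReal_mul' (by positivity),
    ENNReal.ofReal_mul (by positivity), ENNReal.ofReal_pow (by positivity),
    ENNReal.ofReal_pow (by positivity), ENNReal.ofReal_inv_of_pos hKR,
    ENNReal.ofReal_inv_of_pos hMR, ENNReal.ofReal_natCast, ENNReal.ofReal_natCast,
    ENNReal.ofReal_natCast, ENNReal.ofReal_natCast] at this

theorem ENNReal.ofReal_one_sub_mul_choose_mul_inv_pow_le_sum_prod {α : Type*} [DecidableEq α]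
    (s : Finset α) {M N : ℕ} (hNM : N ≤ M) (hM : 0 < M) (hMs : M ≤ #s) {p q : ℝ≥0∞}
    (hpq : p + q = 1) (x : Fin N → α) (hx : ∀ i, x i ∈ s) :
    ENNReal.ofReal (1 - (N : ℝ) ^ 2 / M) * (#s).choose M * (#s : ℝ≥0∞)⁻¹ ^ N
      ≤ ∑ S ∈ s.powersetCard M,
          ∏ i, (p * (if x i ∈ S then (M : ℝ≥0∞)⁻¹ else 0) + q * (#s : ℝ≥0∞)⁻¹) := by
  set c := ENNReal.ofReal (1 - (N : ℝ) ^ 2 / M)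
  have hsplit : (#s : ℝ≥0∞)⁻¹ ^ N = ∑ T ∈ (univ : Finset (Fin N)).powerset,
      (p * (#s : ℝ≥0∞)⁻¹) ^ #T * (q * (#s : ℝ≥0∞)⁻¹) ^ (N - #T) := by
    have h := sum_pow_mul_eq_add_pow (p * (#s : ℝ≥0∞)⁻¹) (q * (#s : ℝ≥0∞)⁻¹)
      (univ : Finset (Fin N))
    rwa [card_univ, Fintype.card_fin, ← add_mul, hpq, one_mul, eq_comm] at h
  calc c * (#s).choose M * (#s : ℝ≥0∞)⁻¹ ^ N
      = ∑ T ∈ (univ : Finset (Fin N)).powerset, (p ^ #T * (q * (#s : ℝ≥0∞)⁻¹) ^ (N - #T)) *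
          (c * (#s).choose M * (#s : ℝ≥0∞)⁻¹ ^ #T) := by
        rw [hsplit, mul_sum]
        refine sum_congr rfl fun T _ => ?_
        rw [mul_pow]; ring
    _ ≤ ∑ T ∈ (univ : Finset (Fin N)).powerset, (p ^ #T * (q * (#s : ℝ≥0∞)⁻¹) ^ (N - #T)) *
          ((M : ℝ≥0∞)⁻¹ ^ #T * (#s - #T).choose (M - #T)) := by
        refine sum_le_sum fun T _ => mul_le_mul_right ?_ _
        exact ENNReal.ofReal_one_sub_mul_choose_mul_inv_pow_le
          (by simpa using card_le_card (subset_univ T)) hNM hM hMs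
    _ = ∑ T ∈ (univ : Finset (Fin N)).powerset, (p * (M : ℝ≥0∞)⁻¹) ^ #T *
          (q * (#s : ℝ≥0∞)⁻¹) ^ (N - #T) * ((#s - #T).choose (M - #T) : ℝ≥0∞) := by
        refine sum_congr rfl fun T _ => ?_
        rw [mul_pow]; ring
    _ ≤ _ := by
        simpa only [mul_ite, mul_zero] using
          sum_pow_mul_choose_le_sum_powersetCard_prod zero_le zero_le s hNM hMs x hx

noncomputable def PMF.mixture {α : Type*} (p q : ℝ≥0∞) (hpq : p + q = 1) (P Q : PMF α) :
    PMF α :=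
  ⟨fun x => p * P x + q * Q x, by
    convert ENNReal.summable.hasSum
    rw [ENNReal.tsum_add, ENNReal.tsum_mul_left, ENNReal.tsum_mul_left, P.tsum_coe, Q.tsum_coe,
      mul_one, mul_one, hpq]⟩

theorem PMF.mixture_apply {α : Type*} (p q : ℝ≥0∞) (hpq : p + q = 1) (P Q : PMF α) (x : α) :
    mixture p q hpq P Q x = p * P x + q * Q x := rfl

theorem tvPMF_uniformOfFinset_of_subset {α : Type*} {s t : Finset α} (hs : s.Nonempty)
    (ht : t.Nonempty) (hst : s ⊆ t) :
    tvPMF (PMF.uniformOfFinset t ht) (PMF.uniformOfFinset s hs) = 1 - #s / #t := by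
  classical
  have hpos : (0 : ℝ) < #s := by exact_mod_cast hs.card_pos
  have hle : (#s : ℝ) ≤ #t := by exact_mod_cast card_le_card hst
  have hdiff : ∀ x ∈ t,
      |(PMF.uniformOfFinset t ht x).toReal - (PMF.uniformOfFinset s hs x).toReal|
        = if x ∈ s then (#s : ℝ)⁻¹ - (#t : ℝ)⁻¹ else (#t : ℝ)⁻¹ := by
    intro x hx
    by_cases hxs : x ∈ s
    · simp only [PMF.uniformOfFinset_apply, hx, hxs, if_true, ENNReal.toReal_inv,
        ENNReal.toReal_natCast]
      rw [abs_sub_comm, abs_of_nonneg (sub_nonneg.2 (inv_anti₀ hpos hle))]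
    · simp [PMF.uniformOfFinset_apply, hx, hxs]
  have hzero : ∀ x ∉ t,
      |(PMF.uniformOfFinset t ht x).toReal - (PMF.uniformOfFinset s hs x).toReal| = 0 := by
    intro x hx
    simp [PMF.uniformOfFinset_apply, hx, show x ∉ s from fun h => hx (hst h)]
  rw [tvPMF, tsum_eq_sum hzero, sum_congr rfl hdiff, sum_ite, sum_const, sum_const,
    filter_mem_eq_inter, inter_eq_right.2 hst, filter_notMem_eq_sdiff, card_sdiff_of_subset hst,
    nsmul_eq_mul, nsmul_eq_mul, Nat.cast_sub (card_le_card hst)]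
  field_simp
  ring

theorem PMF.pi_toMeasure_singleton {X : Type*} [MeasurableSpace X]
    [MeasurableSingletonClass X] {N : ℕ} (P : PMF X) (x : Fin N → X) :
    Measure.pi (fun _ : Fin N => P.toMeasure) {x} = ∏ i, P (x i) := by
  simp [Measure.pi_singleton, PMF.toMeasure_apply_singleton]

theorem PMF.ofReal_one_sub_mul_choose_mul_pi_uniformOfFinset_le_sum {X : Type*}
    [MeasurableSpace X] [MeasurableSingletonClass X] [DecidableEq X] {base : Finset X}
    (hbase : base.Nonempty) {M N : ℕ} (hNM : N ≤ M) (hM : 0 < M) (hMK : M ≤ #base)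
    {p q : ℝ≥0∞} (hpq : p + q = 1) (P₁ : base.powersetCard M → PMF X)
    (hP₁ : ∀ S, ∀ y ∈ base,
      P₁ S y = p * (if y ∈ S.1 then (M : ℝ≥0∞)⁻¹ else 0) + q * (#base : ℝ≥0∞)⁻¹)
    (x : Fin N → X) :
    ENNReal.ofReal (1 - (N : ℝ) ^ 2 / M) * (#base).choose M *
        Measure.pi (fun _ : Fin N => (uniformOfFinset base hbase).toMeasure) {x}
      ≤ ∑ S ∈ (base.powersetCard M).attach,
          Measure.pi (fun _ : Fin N => (P₁ S).toMeasure) {x} := by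
  simp only [pi_toMeasure_singleton, uniformOfFinset_apply]
  by_cases hx : ∀ i, x i ∈ base
  · rw [sum_congr rfl fun S _ => prod_congr rfl fun i _ => hP₁ S (x i) (hx i),
      sum_attach (base.powersetCard M) fun S => ∏ i, (p * (if x i ∈ S then (M : ℝ≥0∞)⁻¹ else 0)
        + q * (#base : ℝ≥0∞)⁻¹)]
    simp only [hx, if_true, prod_const, card_univ, Fintype.card_fin]
    exact ENNReal.ofReal_one_sub_mul_choose_mul_inv_pow_le_sum_prod base hNM hM hMK hpq x hx
  · obtain ⟨i, hi⟩ := not_forall.1 hx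
    rw [prod_eq_zero (mem_univ i) (if_neg hi), mul_zero]
    exact zero_le

namespace MeasureTheory.Measure

variable {ι Ω : Type*} [MeasurableSpace ι] [Countable ι] [MeasurableSingletonClass ι]
  [MeasurableSpace Ω]

-- Detectors are not assumed measurable, so `E` is an arbitrary set; the measurable slabs
-- `{x} ×ˢ univ` still split its outer measure.
theorem prod_apply_eq_tsum_singleton (ν : Measure ι) [SFinite ν] (μ : Measure Ω) [SFinite μ]
    (E : Set (ι × Ω)) : ν.prod μ E = ∑' x, ν {x} * μ (Prod.mk x ⁻¹' E) := by
  set T := toMeasurable (ν.prod μ) E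
  have hslab : ∀ x : ι, MeasurableSet (({x} : Set ι) ×ˢ (Set.univ : Set Ω)) := fun x =>
    (measurableSet_singleton x).prod MeasurableSet.univ
  calc ν.prod μ E = ν.prod μ (⋃ x, T ∩ ({x} ×ˢ Set.univ)) := by
        rw [← Set.inter_iUnion, ← Set.iUnion_prod_const, Set.iUnion_of_singleton,
          Set.univ_prod_univ, Set.inter_univ, measure_toMeasurable]
    _ = ∑' x, ν.prod μ (T ∩ ({x} ×ˢ Set.univ)) := by
        refine measure_iUnion (fun x y hxy => ?_) fun x =>
          (measurableSet_toMeasurable _ _).inter (hslab x)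
        exact (Set.disjoint_prod.2 (Or.inl (Set.disjoint_singleton.2 hxy))).mono
          Set.inter_subset_right Set.inter_subset_right
    _ = ∑' x, ν {x} * μ (Prod.mk x ⁻¹' E) := by
        refine tsum_congr fun x => ?_
        rw [measure_toMeasurable_inter_of_sFinite (hslab x), ← prod_prod]
        congr 1
        ext ⟨y, ω⟩
        simp +contextual [and_comm]

theorem mul_prod_apply_le_sum_prod_apply {κ : Type*} {c : ℝ≥0∞} {ν : Measure ι} [SFinite ν]
    {I : Finset κ} {ν' : κ → Measure ι} [∀ k, SFinite (ν' k)]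
    (h : ∀ x, c * ν {x} ≤ ∑ k ∈ I, ν' k {x}) (μ : Measure Ω) [SFinite μ] (E : Set (ι × Ω)) :
    c * ν.prod μ E ≤ ∑ k ∈ I, (ν' k).prod μ E := by
  simp_rw [prod_apply_eq_tsum_singleton]
  rw [← ENNReal.tsum_mul_left, ← Summable.tsum_finsetSum fun _ _ => ENNReal.summable]
  refine ENNReal.tsum_le_tsum fun x => ?_
  rw [← mul_assoc, ← sum_mul]
  gcongr
  exact h x

end MeasureTheory.Measure

section Testing

variable {ι Ω : Type*} [MeasurableSpace ι] [MeasurableSpace Ω]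

noncomputable def testRisk (φ : ι → Ω → Bool) (ν₀ ν₁ : Measure ι) (μ : Measure Ω) : ℝ :=
  1 / 2 * (ν₁.prod μ {q | φ q.1 q.2 = false}).toReal +
    1 / 2 * (ν₀.prod μ {q | φ q.1 q.2 = true}).toReal

theorem exists_le_two_mul_testRisk [Countable ι] [MeasurableSingletonClass ι] {κ : Type*}
    {I : Finset κ} (hI : I.Nonempty) {c : ℝ} (hc0 : 0 ≤ c) (hc1 : c ≤ 1)
    {ν₀ : Measure ι} [IsProbabilityMeasure ν₀] {ν₁ : κ → Measure ι}
    [∀ k, IsProbabilityMeasure (ν₁ k)]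
    (h : ∀ x, ENNReal.ofReal c * #I * ν₀ {x} ≤ ∑ k ∈ I, ν₁ k {x})
    (φ : ι → Ω → Bool) (μ : Measure Ω) [IsProbabilityMeasure μ] :
    ∃ k ∈ I, c ≤ 2 * testRisk φ ν₀ (ν₁ k) μ := by
  set E := {q : ι × Ω | φ q.1 q.2 = false}
  set F := {q : ι × Ω | φ q.1 q.2 = true}
  have hcover : 1 ≤ (ν₀.prod μ E).toReal + (ν₀.prod μ F).toReal := by
    rw [← ENNReal.toReal_add (measure_ne_top _ _) (measure_ne_top _ _)]
    refine (ENNReal.toReal_le_toReal ENNReal.one_ne_top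
      (ENNReal.add_ne_top.2 ⟨measure_ne_top _ _, measure_ne_top _ _⟩)).2 ?_
    calc (1 : ℝ≥0∞) = ν₀.prod μ (E ∪ F) := by
          rw [show E ∪ F = Set.univ by ext q; simp [E, F], measure_univ]
      _ ≤ ν₀.prod μ E + ν₀.prod μ F := measure_union_le E F
  have hdom : c * #I * (ν₀.prod μ E).toReal ≤ ∑ k ∈ I, ((ν₁ k).prod μ E).toReal := by
    have := ENNReal.toReal_mono (ENNReal.sum_ne_top.2 fun k _ => measure_ne_top _ _)
      (Measure.mul_prod_apply_le_sum_prod_apply h μ E)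
    rwa [ENNReal.toReal_sum fun k _ => measure_ne_top _ _, ENNReal.toReal_mul,
      ENNReal.toReal_mul, ENNReal.toReal_ofReal hc0, ENNReal.toReal_natCast] at this
  have hrisk : ∀ k, 2 * testRisk φ ν₀ (ν₁ k) μ
      = ((ν₁ k).prod μ E).toReal + (ν₀.prod μ F).toReal := fun k => by
    rw [testRisk]; ring
  refine exists_le_of_sum_le hI ?_
  rw [sum_congr rfl fun k _ => hrisk k, sum_add_distrib, sum_const, sum_const, nsmul_eq_mul,
    nsmul_eq_mul]
  have hF : 0 ≤ (ν₀.prod μ F).toReal := ENNReal.toReal_nonneg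
  have hI0 : (0 : ℝ) ≤ #I := Nat.cast_nonneg _
  nlinarith [mul_le_mul_of_nonneg_left hcover (mul_nonneg hc0 hI0),
    mul_nonneg hI0 (mul_nonneg (sub_nonneg.2 hc1) hF)]

end Testing

theorem PMF.exists_le_two_mul_testRisk_mixture_uniformOfFinset {X Ω : Type*} [MeasurableSpace X]
    [Countable X] [MeasurableSingletonClass X] [MeasurableSpace Ω] {base : Finset X}
    (hbase : base.Nonempty) {M N : ℕ} (hNM : N * N < M) (hMK : M ≤ #base) {p q : ℝ≥0∞}
    (hpq : p + q = 1) (φ : (Fin N → X) → Ω → Bool) (μ : Measure Ω) [IsProbabilityMeasure μ] :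
    ∃ S ∈ base.powersetCard M, ∃ hS : S.Nonempty,
      1 - (N : ℝ) ^ 2 / M ≤ 2 * testRisk φ
        (Measure.pi fun _ => (uniformOfFinset base hbase).toMeasure)
        (Measure.pi fun _ =>
          (mixture p q hpq (uniformOfFinset S hS) (uniformOfFinset base hbase)).toMeasure) μ := by
  classical
  have hM : 0 < M := by omega
  have hSne : ∀ S : base.powersetCard M, S.1.Nonempty := fun S =>
    card_pos.1 (by rw [(mem_powersetCard.1 S.2).2]; exact hM)
  set P₁ := fun S : base.powersetCard M =>
    mixture p q hpq (uniformOfFinset S.1 (hSne S)) (uniformOfFinset base hbase)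
  have hdom := ofReal_one_sub_mul_choose_mul_pi_uniformOfFinset_le_sum hbase (N := N)
    (by nlinarith) hM hMK hpq P₁ fun S y hy => by
      simp [P₁, mixture_apply, uniformOfFinset_apply, hy, (mem_powersetCard.1 S.2).2]
  rw [← card_powersetCard, ← card_attach] at hdom
  have hNM' : (N : ℝ) ^ 2 < M := by rw [sq]; exact_mod_cast hNM
  obtain ⟨S, -, hS⟩ := exists_le_two_mul_testRisk
    (attach_nonempty_iff.2 <| powersetCard_nonempty.2 hMK)
    (sub_nonneg.2 ((div_le_one (by positivity)).2 hNM'.le)) (sub_le_self _ (by positivity))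
    hdom φ μ
  exact ⟨S.1, S.2, hSne S, hS⟩

def IsTypeTwoDetector {X Ω : Type*} [MeasurableSpace X] [MeasurableSpace Ω] {N : ℕ}
    (μΩ : Measure Ω) (γ β α : ℝ) (g : (Fin N → X) → PMF X → Ω → Bool) : Prop :=
  ∀ P₀ Pb P₁ : PMF X,
    (∀ x, P₁ x = ENNReal.ofReal γ * Pb x + ENNReal.ofReal (1 - γ) * P₀ x) →
    1 - β ≤ tvPMF P₀ Pb →
    testRisk (fun x ω => g x P₀ ω) (Measure.pi fun _ => P₀.toMeasure)
      (Measure.pi fun _ => P₁.toMeasure) μΩ ≤ α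

theorem IsTypeTwoDetector.one_sub_sq_div_le_two_mul {X Ω : Type*} [MeasurableSpace X]
    [Countable X] [Infinite X] [MeasurableSingletonClass X] [MeasurableSpace Ω] {μΩ : Measure Ω}
    [IsProbabilityMeasure μΩ] {N : ℕ} {γ β α : ℝ} {g : (Fin N → X) → PMF X → Ω → Bool}
    (hg : IsTypeTwoDetector μΩ γ β α g) (hγ0 : 0 ≤ γ) (hγ1 : γ ≤ 1) (hβ : 0 < β) {M : ℕ}
    (hNM : N * N < M) : 1 - (N : ℝ) ^ 2 / M ≤ 2 * α := by
  have hγ : ENNReal.ofReal γ + ENNReal.ofReal (1 - γ) = 1 := by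
    rw [← ENNReal.ofReal_add hγ0 (by linarith), add_sub_cancel, ENNReal.ofReal_one]
  obtain ⟨K, hMK, hβK⟩ : ∃ K : ℕ, M ≤ K ∧ (M : ℝ) / K ≤ β := by
    obtain ⟨n, hn⟩ := exists_nat_ge ((M : ℝ) / β)
    refine ⟨max M n, le_max_left _ _, ?_⟩
    rw [div_le_iff₀ (by exact_mod_cast (show 0 < M by omega).trans_le (le_max_left M n)),
      ← div_le_iff₀' hβ]
    exact hn.trans (by exact_mod_cast le_max_right M n)
  set base := (range K).map (Infinite.natEmbedding X)
  have hcard : #base = K := by simp [base]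
  have hbase : base.Nonempty := card_pos.1 (by omega)
  obtain ⟨S, hSmem, hSne, hS⟩ := PMF.exists_le_two_mul_testRisk_mixture_uniformOfFinset hbase
    hNM (hcard ▸ hMK) hγ (fun x ω => g x (PMF.uniformOfFinset base hbase) ω) μΩ
  have htv : 1 - β ≤ tvPMF (PMF.uniformOfFinset base hbase) (PMF.uniformOfFinset S hSne) := by
    rw [tvPMF_uniformOfFinset_of_subset _ _ (mem_powersetCard.1 hSmem).1,
      (mem_powersetCard.1 hSmem).2, hcard]
    linarith
  linarith [hg _ _ (PMF.mixture _ _ hγ _ _) (fun _ => rfl) htv]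

theorem stmt14_general {X Ω : Type*} [Countable X] [Infinite X]
    [MeasurableSpace X] [MeasurableSingletonClass X]
    [MeasurableSpace Ω] (μΩ : Measure Ω) [IsProbabilityMeasure μΩ]
    (N : ℕ) (γ β α : ℝ) (hγ0 : 0 < γ) (hγ1 : γ ≤ 1) (hβ0 : 0 < β)
    (hα : α ≤ 1 / 2)
    (g : (Fin N → X) → PMF X → Ω → Bool)
    (hdet : ∀ P₀ Pb P₁ : PMF X,
      (∀ x, P₁ x = ENNReal.ofReal γ * Pb x + ENNReal.ofReal (1 - γ) * P₀ x) →
      1 - β ≤ tvPMF P₀ Pb →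
      1 / 2 * (((Measure.pi fun _ : Fin N => P₁.toMeasure).prod μΩ)
          {q | g q.1 P₀ q.2 = false}).toReal +
      1 / 2 * (((Measure.pi fun _ : Fin N => P₀.toMeasure).prod μΩ)
          {q | g q.1 P₀ q.2 = true}).toReal ≤ α) :
    α = 1 / 2 := by
  have hg : IsTypeTwoDetector μΩ γ β α g := hdet
  have hlim : Tendsto (fun M : ℕ => 1 - (N : ℝ) ^ 2 / M) atTop (𝓝 1) := by
    simpa using tendsto_const_nhds.sub (tendsto_const_div_atTop_nhds_zero_nat ((N : ℝ) ^ 2))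
  have hbound : ∀ᶠ M : ℕ in atTop, 1 - (N : ℝ) ^ 2 / M ≤ 2 * α :=
    (eventually_gt_atTop (N * N)).mono fun _ hNM =>
      hg.one_sub_sq_div_le_two_mul hγ0.le hγ1 hβ0 hNM
  linarith [le_of_tendsto hlim hbound]

/-- Infinite-alphabet impossibility: any α-error Type-2 detector over
P = {(P₀,P_b) : TV(P₀,P_b) ≥ 1-β} on a countably infinite alphabet has α = ½,
i.e., cannot beat random guessing. -/
theorem stmt14 {X Ω : Type*} [Countable X] [Infinite X]
    [MeasurableSpace X] [MeasurableSingletonClass X]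
    [MeasurableSpace Ω] (μΩ : Measure Ω) [IsProbabilityMeasure μΩ]
    (N : ℕ) (γ β α : ℝ) (hγ0 : 0 < γ) (hγ1 : γ ≤ 1) (hβ0 : 0 < β) (hβ1 : β ≤ 1)
    (hα : α ≤ 1 / 2)
    (g : (Fin N → X) → PMF X → Ω → Bool)
    (hdet : ∀ P₀ Pb P₁ : PMF X,
      (∀ x, P₁ x = ENNReal.ofReal γ * Pb x + ENNReal.ofReal (1 - γ) * P₀ x) →
      1 - β ≤ tvPMF P₀ Pb →
      1 / 2 * (((Measure.pi fun _ : Fin N => P₁.toMeasure).prod μΩ)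
          {q | g q.1 P₀ q.2 = false}).toReal +
      1 / 2 * (((Measure.pi fun _ : Fin N => P₀.toMeasure).prod μΩ)
          {q | g q.1 P₀ q.2 = true}).toReal ≤ α) :
    α = 1 / 2 :=
  stmt14_general μΩ N γ β α hγ0 hγ1 hβ0 hα g hdet
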